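/- Under the stated smoothness assumptions on ξ, let V : ℝ^d → ℝ be continuously differentiable, a : ℝ → ℝ continuously differentiable with a > 0, β > 0, and define the matrix field D(q) := P⊥(q) + a(ξ(q)) P(q). Then for every q ∈ ℝ^d the drift of ξ under the generator of the reversible diffusion with diffusion matrix D satisfies: ∇ξ(q) · ( −D(q)∇V(q) + β⁻¹ div D(q) ) + β⁻¹ Σ_{i,j} D_{ij}(q) ∂²_{ij}ξ(q) = −a(ξ(q)) ( ∇V(q)·∇ξ(q) − β⁻¹ Δξ(q) ) + β⁻¹ a'(ξ(q)) ‖∇ξ(q)‖². -/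

import Mathlib

open Matrix BigOperators

/-- Partial derivative `∂_j f (q)` of a scalar field on `ℝ^d`. -/
noncomputable def pdrv {d : ℕ} (j : Fin d) (f : (Fin d → ℝ) → ℝ) (q : Fin d → ℝ) : ℝ :=
  fderiv ℝ f q (Pi.single j 1)

/-- Gradient `∇f(q)` of a scalar field on `ℝ^d`. -/
noncomputable def gradv {d : ℕ} (f : (Fin d → ℝ) → ℝ) (q : Fin d → ℝ) : Fin d → ℝ :=
  fun j => pdrv j f q

/-- Hessian matrix `∇²f(q)`, with entries `(i,j) ↦ ∂_j ∂_i f(q)`. -/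
noncomputable def hessM {d : ℕ} (f : (Fin d → ℝ) → ℝ) (q : Fin d → ℝ) :
    Matrix (Fin d) (Fin d) ℝ :=
  Matrix.of fun i j => pdrv j (fun q' => pdrv i f q') q

/-- Laplacian `Δf(q)`. -/
noncomputable def lapl {d : ℕ} (f : (Fin d → ℝ) → ℝ) (q : Fin d → ℝ) : ℝ :=
  ∑ i, hessM f q i i

/-- Divergence of a matrix field, `(div M)_i = ∑_j ∂_j M_{ij}`. -/
noncomputable def divMat {d : ℕ} (M : (Fin d → ℝ) → Matrix (Fin d) (Fin d) ℝ)
    (q : Fin d → ℝ) : Fin d → ℝ :=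
  fun i => ∑ j, pdrv j (fun q' => M q' i j) q

/-- The projection field `P(q) = ∇ξ(q) ⊗ ∇ξ(q)/‖∇ξ(q)‖²`. -/
noncomputable def projP {d : ℕ} (ξ : (Fin d → ℝ) → ℝ) (q : Fin d → ℝ) :
    Matrix (Fin d) (Fin d) ℝ :=
  Matrix.of fun i j => gradv ξ q i * gradv ξ q j / (∑ k, gradv ξ q k ^ 2)

/-!
Write `g = ∇ξ`. Since `P` is the orthogonal projection onto `g`, `Dᵀ g = a(ξ) g`, so the drift
part is `−a(ξ) ∇V · g`, and the product rule for the divergence turns the two `β⁻¹` terms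
`g · div D + D : ∇g` into `div (Dᵀ g) = div (a(ξ) g) = a'(ξ) ‖g‖² + a(ξ) Δξ`. In particular
no derivative of the normalisation `‖g‖⁻²` is ever computed.
-/

noncomputable def divVec {d : ℕ} (w : (Fin d → ℝ) → Fin d → ℝ) (q : Fin d → ℝ) : ℝ :=
  ∑ j, pdrv j (fun x => w x j) q

section Calculus

variable {d : ℕ} {j : Fin d} {f g : (Fin d → ℝ) → ℝ} {q : Fin d → ℝ}

theorem pdrv_mul (hf : DifferentiableAt ℝ f q) (hg : DifferentiableAt ℝ g q) :
    pdrv j (fun x => f x * g x) q = f q * pdrv j g q + g q * pdrv j f q := by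
  simp [pdrv, fderiv_fun_mul hf hg]

theorem pdrv_sum {ι : Type*} (s : Finset ι) {F : ι → (Fin d → ℝ) → ℝ}
    (hF : ∀ i ∈ s, DifferentiableAt ℝ (F i) q) :
    pdrv j (fun x => ∑ i ∈ s, F i x) q = ∑ i ∈ s, pdrv j (F i) q := by
  simp [pdrv, fderiv_fun_sum hF]

theorem gradv_comp {a : ℝ → ℝ} (ha : DifferentiableAt ℝ a (f q)) (hf : DifferentiableAt ℝ f q) :
    gradv (fun x => a (f x)) q = deriv a (f q) • gradv f q := by
  ext j
  rw [show (fun x => a (f x)) = a ∘ f from rfl]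
  simp [gradv, pdrv, (ha.hasDerivAt.comp_hasFDerivAt q hf.hasFDerivAt).fderiv]

theorem differentiable_gradv_apply (hf : ContDiff ℝ 2 f) (i : Fin d) :
    Differentiable ℝ (fun x => gradv f x i) :=
  ((hf.fderiv_right (by norm_num)).clm_apply contDiff_const).differentiable one_ne_zero

theorem hessM_apply (i j : Fin d) : hessM f q i j = pdrv j (fun x => gradv f x i) q := rfl

theorem lapl_eq_divVec_gradv : lapl f q = divVec (gradv f) q := rfl

theorem divVec_smul {w : (Fin d → ℝ) → Fin d → ℝ} (hf : DifferentiableAt ℝ f q)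
    (hw : ∀ i, DifferentiableAt ℝ (fun x => w x i) q) :
    divVec (fun x => f x • w x) q = gradv f q ⬝ᵥ w q + f q * divVec w q := by
  simp only [divVec, Pi.smul_apply, smul_eq_mul, pdrv_mul hf (hw _), Finset.sum_add_distrib,
    Finset.mul_sum, dotProduct, gradv, add_comm (∑ j, f q * _)]
  exact congrArg₂ _ (Finset.sum_congr rfl fun _ _ => mul_comm _ _) rfl

theorem divVec_vecMul {v : (Fin d → ℝ) → Fin d → ℝ}
    {M : (Fin d → ℝ) → Matrix (Fin d) (Fin d) ℝ}
    (hv : ∀ i, DifferentiableAt ℝ (fun x => v x i) q)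
    (hM : ∀ i j, DifferentiableAt ℝ (fun x => M x i j) q) :
    divVec (fun x => v x ᵥ* M x) q
      = v q ⬝ᵥ divMat M q + ∑ i, ∑ j, M q i j * pdrv j (fun x => v x i) q := by
  simp only [divVec, vecMul, dotProduct, divMat, Finset.mul_sum, ← Finset.sum_add_distrib]
  rw [Finset.sum_comm]
  refine Finset.sum_congr rfl fun j _ => ?_
  rw [pdrv_sum (F := fun i x => v x i * M x i j) _ fun i _ => (hv i).mul (hM i j)]
  exact Finset.sum_congr rfl fun i _ => pdrv_mul (hv i) (hM i j)

end Calculus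

section Projection

variable {d : ℕ} {ξ : (Fin d → ℝ) → ℝ} {q : Fin d → ℝ}

theorem sum_sq_gradv_ne_zero (h : gradv ξ q ≠ 0) : ∑ k, gradv ξ q k ^ 2 ≠ 0 := by
  obtain ⟨k, hk⟩ := Function.ne_iff.mp h
  replace hk : gradv ξ q k ≠ 0 := hk
  exact (Finset.sum_pos' (fun i _ => sq_nonneg _) ⟨k, Finset.mem_univ k, by positivity⟩).ne'

theorem vecMul_projP (h : gradv ξ q ≠ 0) : gradv ξ q ᵥ* projP ξ q = gradv ξ q := by
  ext j
  have hN := sum_sq_gradv_ne_zero h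
  simp only [vecMul, dotProduct, projP, of_apply]
  calc ∑ i, gradv ξ q i * (gradv ξ q i * gradv ξ q j / ∑ k, gradv ξ q k ^ 2)
      = (∑ i, gradv ξ q i ^ 2) * gradv ξ q j / ∑ k, gradv ξ q k ^ 2 := by
        rw [Finset.sum_mul, Finset.sum_div]
        exact Finset.sum_congr rfl fun i _ => by ring
    _ = gradv ξ q j := by field_simp

theorem vecMul_one_sub_projP_add_smul_projP (h : gradv ξ q ≠ 0) (c : ℝ) :
    gradv ξ q ᵥ* ((1 - projP ξ q) + c • projP ξ q) = c • gradv ξ q := by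
  rw [vecMul_add, vecMul_sub, vecMul_smul, vecMul_one, vecMul_projP h, sub_self, zero_add]

theorem differentiableAt_projP_apply (hξ : ContDiff ℝ 2 ξ) (h : gradv ξ q ≠ 0) (i j : Fin d) :
    DifferentiableAt ℝ (fun x => projP ξ x i j) q := by
  have hg := differentiable_gradv_apply hξ
  have hN := sum_sq_gradv_ne_zero h
  simp only [projP, of_apply]
  fun_prop (disch := exact hN)

end Projection

theorem effective_drift_identity_general (d : ℕ) (ξ : (Fin d → ℝ) → ℝ)
    (hξ : ContDiff ℝ 2 ξ) (hgrad : ∀ q, gradv ξ q ≠ 0)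
    (V : (Fin d → ℝ) → ℝ)
    (a : ℝ → ℝ) (ha : ContDiff ℝ 1 a)
    (β : ℝ) (q : Fin d → ℝ) :
    let D : (Fin d → ℝ) → Matrix (Fin d) (Fin d) ℝ :=
      fun q' => ((1 : Matrix (Fin d) (Fin d) ℝ) - projP ξ q') + a (ξ q') • projP ξ q'
    gradv ξ q ⬝ᵥ (-(D q *ᵥ gradv V q) + β⁻¹ • divMat D q)
        + β⁻¹ * ∑ i, ∑ j, D q i j * hessM ξ q i j
      = - a (ξ q) * (gradv V q ⬝ᵥ gradv ξ q - β⁻¹ * lapl ξ q)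
        + β⁻¹ * deriv a (ξ q) * (∑ k, gradv ξ q k ^ 2) := by
  intro D
  have hg := differentiable_gradv_apply hξ
  have ha₁ : Differentiable ℝ a := ha.differentiable one_ne_zero
  have hξ₁ : Differentiable ℝ ξ := hξ.differentiable two_ne_zero
  have haξ : Differentiable ℝ (fun x => a (ξ x)) := ha₁.comp hξ₁
  have hD : ∀ i j, DifferentiableAt ℝ (fun x => D x i j) q := fun i j =>
    ((differentiableAt_const _).sub (differentiableAt_projP_apply hξ (hgrad q) i j)).add
      ((haξ q).mul (differentiableAt_projP_apply hξ (hgrad q) i j))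
  have hDg : (fun x => gradv ξ x ᵥ* D x) = fun x => a (ξ x) • gradv ξ x :=
    funext fun x => vecMul_one_sub_projP_add_smul_projP (hgrad x) _
  have hdiv : gradv ξ q ⬝ᵥ divMat D q + ∑ i, ∑ j, D q i j * hessM ξ q i j
      = deriv a (ξ q) * ∑ k, gradv ξ q k ^ 2 + a (ξ q) * lapl ξ q := by
    simp only [hessM_apply]
    rw [← divVec_vecMul (fun i => hg i q) hD, hDg, divVec_smul (haξ q) (fun i => hg i q),
      gradv_comp (ha₁ _) (hξ₁ q),
      smul_dotProduct, lapl_eq_divVec_gradv]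
    simp [dotProduct, sq]
  rw [dotProduct_add, dotProduct_neg, dotProduct_mulVec, congrFun hDg q, smul_dotProduct,
    dotProduct_smul, smul_eq_mul, smul_eq_mul, dotProduct_comm (gradv V q)]
  linear_combination β⁻¹ * hdiv

/-- Drift of `ξ` under the generator of the reversible diffusion with matrix
`D = P⊥ + a(ξ)P`:
`∇ξ·(−D∇V + β⁻¹div D) + β⁻¹ D:∇²ξ = −a(ξ)(∇V·∇ξ − β⁻¹Δξ) + β⁻¹a'(ξ)‖∇ξ‖²`. -/
theorem effective_drift_identity (d : ℕ) (ξ : (Fin d → ℝ) → ℝ)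
    (hξ : ContDiff ℝ 2 ξ) (hgrad : ∀ q, gradv ξ q ≠ 0)
    (V : (Fin d → ℝ) → ℝ) (hV : ContDiff ℝ 1 V)
    (a : ℝ → ℝ) (ha : ContDiff ℝ 1 a) (hapos : ∀ z, 0 < a z)
    (β : ℝ) (hβ : 0 < β) (q : Fin d → ℝ) :
    let D : (Fin d → ℝ) → Matrix (Fin d) (Fin d) ℝ :=
      fun q' => ((1 : Matrix (Fin d) (Fin d) ℝ) - projP ξ q') + a (ξ q') • projP ξ q'
    gradv ξ q ⬝ᵥ (-(D q *ᵥ gradv V q) + β⁻¹ • divMat D q)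
        + β⁻¹ * ∑ i, ∑ j, D q i j * hessM ξ q i j
      = - a (ξ q) * (gradv V q ⬝ᵥ gradv ξ q - β⁻¹ * lapl ξ q)
        + β⁻¹ * deriv a (ξ q) * (∑ k, gradv ξ q k ^ 2) :=
  effective_drift_identity_general d ξ hξ hgrad V a ha β q
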